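/- arXiv:1910.02646 — 2 statements merged into one kernel-verified Lean document; each statement's English description precedes it below -/
import Mathlib

section
/- Let G, B : ℝⁿ → Matrix (Fin n) (Fin n) ℝ with G(x) symmetric positive definite and B(x) positive semidefinite for all x, and let Φ : ℝⁿ → ℝ be differentiable. Suppose x : ℝ → ℝⁿ is a twice-differentiable trajectory satisfying the geometric dynamical system G(x(t)) ẍ(t) + ξ_G(x(t), ẋ(t)) = -∇Φ(x(t)) - B(x(t), ẋ(t)) ẋ(t), where ξ_G(x, v) = (d/dt G(x(t)))v - (1/2)∇_x(vᵀG(x)v). Then the Lyapunov function V(t) = (1/2) ẋ(t)ᵀ G(x(t)) ẋ(t) + Φ(x(t)) satisfies V̇(t) = -ẋ(t)ᵀ B(x(t), ẋ(t)) ẋ(t) ≤ 0 for all t. -/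
open Matrix

/-! By the product rule, and since `G` is symmetric,
`V̇ = ẋᵀ G ẍ + ½ ẋᵀ Ġ ẋ + ∇Φ · ẋ`. Pairing the gradient `∇_x (vᵀ G v)` with `ẋ` gives the
directional derivative of `G` along the trajectory, i.e. `ẋᵀ Ġ ẋ`, so `ẋ · ξ_G = ½ ẋᵀ Ġ ẋ`.
Dotting the equation of motion with `ẋ` therefore gives `V̇ = -ẋᵀ B ẋ`, which is `≤ 0` because
`B` is positive semidefinite. -/

namespace Matrix

variable {m n : Type*} [Fintype m] [Fintype n]

theorem IsSymm.dotProduct_mulVec_comm {R : Type*} [CommSemiring R] {A : Matrix n n R}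
    (hA : A.IsSymm) (u w : n → R) : u ⬝ᵥ (A *ᵥ w) = w ⬝ᵥ (A *ᵥ u) := by
  rw [dotProduct_mulVec, ← mulVec_transpose, hA.eq, dotProduct_comm]

theorem dotProduct_map_single_one {R F : Type*} [CommSemiring R] [DecidableEq n]
    [FunLike F (n → R) R] [LinearMapClass F R (n → R) R] (L : F) (u : n → R) :
    u ⬝ᵥ (fun k => L (Pi.single k 1)) = L u := by
  conv_rhs => rw [← Finset.univ_sum_single u]
  simp only [map_sum, dotProduct]
  refine Finset.sum_congr rfl fun k _ => ?_
  rw [← smul_eq_mul, ← map_smul, ← Pi.single_smul, smul_eq_mul, mul_one]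

variable {𝕜 : Type*} [NontriviallyNormedField 𝕜]

theorem _root_.HasDerivAt.dotProduct_mulVec {u : 𝕜 → m → 𝕜} {M : 𝕜 → Matrix m n 𝕜}
    {w : 𝕜 → n → 𝕜} {u' : m → 𝕜} {M' : Matrix m n 𝕜} {w' : n → 𝕜} {t : 𝕜}
    (hu : HasDerivAt u u' t) (hM : ∀ i j, HasDerivAt (fun s => M s i j) (M' i j) t)
    (hw : HasDerivAt w w' t) :
    HasDerivAt (fun s => u s ⬝ᵥ (M s *ᵥ w s))
      (u' ⬝ᵥ (M t *ᵥ w t) + u t ⬝ᵥ (M' *ᵥ w t) + u t ⬝ᵥ (M t *ᵥ w')) t := by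
  have hsum := HasDerivAt.fun_sum fun i (_ : i ∈ Finset.univ) => (hasDerivAt_pi.1 hu i).fun_mul
    (HasDerivAt.fun_sum fun j (_ : j ∈ Finset.univ) => (hM i j).fun_mul (hasDerivAt_pi.1 hw j))
  refine hsum.congr_deriv ?_
  simp only [dotProduct, mulVec, Finset.mul_sum, ← Finset.sum_add_distrib]
  exact Finset.sum_congr rfl fun i _ => Finset.sum_congr rfl fun j _ => by ring

theorem dotProduct_gradient_dotProduct_mulVec {ι : Type*} [Fintype ι] [DecidableEq ι]
    {G : (ι → ℝ) → Matrix m n ℝ} {x : ℝ → ι → ℝ} {x' : ι → ℝ} {t : ℝ}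
    (hG : ∀ i j, DifferentiableAt ℝ (fun y => G y i j) (x t)) (hx : HasDerivAt x x' t)
    (u : m → ℝ) (w : n → ℝ) :
    x' ⬝ᵥ (fun k => fderiv ℝ (fun y => u ⬝ᵥ (G y *ᵥ w)) (x t) (Pi.single k 1))
      = u ⬝ᵥ ((of fun i j => deriv (fun s => G (x s) i j) t) *ᵥ w) := by
  have hq : DifferentiableAt ℝ (fun y => u ⬝ᵥ (G y *ᵥ w)) (x t) := by
    simp only [dotProduct, mulVec]
    fun_prop
  have hGx : ∀ i j, HasDerivAt (fun s => G (x s) i j) (deriv (fun s => G (x s) i j) t) t :=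
    fun i j => ((hG i j).comp t hx.differentiableAt).hasDerivAt
  rw [dotProduct_map_single_one]
  refine (hq.hasFDerivAt.comp_hasDerivAt t hx).unique ?_
  have h := (hasDerivAt_const t u).dotProduct_mulVec hGx (hasDerivAt_const t w)
  rwa [zero_dotProduct, mulVec_zero, dotProduct_zero, zero_add, add_zero] at h

end Matrix

/-- Lyapunov stability of a geometric dynamical system (GDS):
along a trajectory of `G(x)ẍ + ξ_G(x,ẋ) = -∇Φ(x) - B(x,ẋ)ẋ`, the energy
`V = ½ ẋᵀG(x)ẋ + Φ(x)` satisfies `V̇ = -ẋᵀB(x,ẋ)ẋ ≤ 0`. -/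
theorem gds_lyapunov {n : ℕ}
    (G : (Fin n → ℝ) → Matrix (Fin n) (Fin n) ℝ)
    (B : (Fin n → ℝ) → (Fin n → ℝ) → Matrix (Fin n) (Fin n) ℝ)
    (Φ : (Fin n → ℝ) → ℝ)
    (gradΦ : (Fin n → ℝ) → (Fin n → ℝ))
    (hGpd : ∀ y, (G y).PosDef)
    (hGdiff : ∀ i j, Differentiable ℝ (fun y => G y i j))
    (hB : ∀ y u, (B y u).PosSemidef)
    (hΦ : Differentiable ℝ Φ)
    (hgradΦ : ∀ y u, fderiv ℝ Φ y u = gradΦ y ⬝ᵥ u)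
    (x v a : ℝ → (Fin n → ℝ))
    (hx : ∀ t, HasDerivAt x (v t) t)
    (hv : ∀ t, HasDerivAt v (a t) t)
    (ξ : ℝ → (Fin n → ℝ))
    -- ξ_G(x(t), ẋ(t)) = (d/dt G(x(t))) ẋ(t) - ½ ∇_x (ẋᵀ G(x) ẋ)
    (hξ : ∀ t, ξ t =
      (Matrix.of fun i j => deriv (fun s => G (x s) i j) t) *ᵥ v t
        - (1 / 2 : ℝ) • (fun k => fderiv ℝ (fun y => v t ⬝ᵥ (G y *ᵥ v t)) (x t) (Pi.single k 1)))
    -- the GDS equation along the trajectory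
    (hdyn : ∀ t, G (x t) *ᵥ a t + ξ t = -(gradΦ (x t)) - B (x t) (v t) *ᵥ v t) :
    ∀ t,
      HasDerivAt (fun s => (1 / 2 : ℝ) * (v s ⬝ᵥ (G (x s) *ᵥ v s)) + Φ (x s))
        (-(v t ⬝ᵥ (B (x t) (v t) *ᵥ v t))) t
      ∧ -(v t ⬝ᵥ (B (x t) (v t) *ᵥ v t)) ≤ 0 := by
  intro t
  set Ġ := of fun i j => deriv (fun s => G (x s) i j) t
  have hĠ : ∀ i j, HasDerivAt (fun s => G (x s) i j) (Ġ i j) t := fun i j =>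
    ((hGdiff i j).differentiableAt.comp t (hx t).differentiableAt).hasDerivAt
  have hkinetic := (hv t).dotProduct_mulVec hĠ (hv t)
  have hpotential : HasDerivAt (fun s => Φ (x s)) (gradΦ (x t) ⬝ᵥ v t) t := by
    rw [← hgradΦ]
    exact (hΦ (x t)).hasFDerivAt.comp_hasDerivAt t (hx t)
  have hsymm : a t ⬝ᵥ (G (x t) *ᵥ v t) = v t ⬝ᵥ (G (x t) *ᵥ a t) :=
    (isHermitian_iff_isSymm.1 (hGpd (x t)).isHermitian).dotProduct_mulVec_comm _ _
  have hcurvature : v t ⬝ᵥ ξ t = (1 / 2) * (v t ⬝ᵥ (Ġ *ᵥ v t)) := by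
    rw [hξ t, dotProduct_sub, dotProduct_smul, smul_eq_mul,
      dotProduct_gradient_dotProduct_mulVec (fun i j => (hGdiff i j).differentiableAt) (hx t)]
    ring
  have hpower : v t ⬝ᵥ (G (x t) *ᵥ a t) + v t ⬝ᵥ ξ t
      = -(v t ⬝ᵥ gradΦ (x t)) - v t ⬝ᵥ (B (x t) (v t) *ᵥ v t) := by
    simpa only [dotProduct_add, dotProduct_sub, dotProduct_neg] using congrArg (v t ⬝ᵥ ·) (hdyn t)
  refine ⟨?_, neg_nonpos.2 (by simpa using (hB (x t) (v t)).dotProduct_mulVec_nonneg (v t))⟩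
  refine ((hkinetic.const_mul (1 / 2 : ℝ)).add hpotential).congr_deriv ?_
  rw [hsymm, dotProduct_comm (gradΦ _)]
  linarith
end

section
/- Let w : ℝⁿ → ℝ be differentiable with w(x) > 0, let G : ℝⁿ → Matrix (Fin n) (Fin n) ℝ be a differentiable symmetric-matrix-valued function, and define ξ_G(x,v) = [∂_x g_i(x) v]ᵢ v - (1/2)∇_x(vᵀG(x)v), where g_i is the i-th column of G. Then the curvature term of the scaled metric wG satisfies, for all x and v: ξ_{wG}(x,v) = w(x) ξ_G(x,v) + (vᵀ∇w(x)) G(x) v - (1/2)(vᵀ G(x) v) ∇w(x). -/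
/-!
Both terms of `ξ` are linear in the first derivatives of the metric, so the Leibniz rule for
`w • G` splits each into a part carrying `w`, which reassembles `w ξ_G`, and a part carrying
`Dw`; the latter becomes the two gradient terms via `Dw(x) v = vᵀ ∇w(x)`.
-/

open Matrix

section

variable {E : Type*} [NormedAddCommGroup E] [NormedSpace ℝ E] {m n : Type*}

theorem differentiable_dotProduct_mulVec [Fintype n] {G : E → Matrix n n ℝ}
    (hG : ∀ i j, Differentiable ℝ (fun y => G y i j)) (v : n → ℝ) :
    Differentiable ℝ (fun y => v ⬝ᵥ (G y *ᵥ v)) := by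
  simp only [dotProduct, mulVec]
  fun_prop

theorem of_fderiv_smul_apply {w : E → ℝ} {G : E → Matrix m n ℝ} {x : E}
    (hw : DifferentiableAt ℝ w x) (hG : ∀ i j, DifferentiableAt ℝ (fun y => G y i j) x) (v : E) :
    (Matrix.of fun i j => fderiv ℝ (fun y => (w y • G y) i j) x v) =
      fderiv ℝ w x v • G x + w x • Matrix.of fun i j => fderiv ℝ (fun y => G y i j) x v := by
  ext i j
  simp [fderiv_fun_mul hw (hG i j)]
  ring

end

section

variable {ι : Type*} [Fintype ι] [DecidableEq ι]

/-- Mathlib's `gradient` needs an inner product space, which `ι → ℝ` (sup norm) is not. -/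
noncomputable def coordGrad (f : (ι → ℝ) → ℝ) (x : ι → ℝ) : ι → ℝ :=
  fun k => fderiv ℝ f x (Pi.single k 1)

theorem fderiv_apply_eq_dotProduct_coordGrad (f : (ι → ℝ) → ℝ) (x v : ι → ℝ) :
    fderiv ℝ f x v = v ⬝ᵥ coordGrad f x := by
  conv_lhs => rw [pi_eq_sum_univ' v]
  simp [map_sum, dotProduct, coordGrad]

theorem coordGrad_mul {f g : (ι → ℝ) → ℝ} {x : ι → ℝ}
    (hf : DifferentiableAt ℝ f x) (hg : DifferentiableAt ℝ g x) :
    coordGrad (fun y => f y * g y) x = g x • coordGrad f x + f x • coordGrad g x := by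
  ext k
  simp [coordGrad, fderiv_fun_mul hf hg]
  ring

end

theorem curvature_scaled_metric_general {n : ℕ}
    (w : (Fin n → ℝ) → ℝ) (hw : Differentiable ℝ w)
    (G : (Fin n → ℝ) → Matrix (Fin n) (Fin n) ℝ)
    (hGdiff : ∀ i j, Differentiable ℝ (fun y => G y i j))
    -- directional derivative matrix: i-th column is (∂_x g_i(x)) v
    (Gdot : ((Fin n → ℝ) → Matrix (Fin n) (Fin n) ℝ) → (Fin n → ℝ) → (Fin n → ℝ) →
      Matrix (Fin n) (Fin n) ℝ)
    (hGdot : ∀ H x v, Gdot H x v = Matrix.of fun i j => fderiv ℝ (fun y => H y i j) x v)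
    -- gradient operator on scalar functions (componentwise partial derivatives)
    (grad : ((Fin n → ℝ) → ℝ) → (Fin n → ℝ) → (Fin n → ℝ))
    (hgrad : ∀ f x k, grad f x k = fderiv ℝ f x (Pi.single k 1))
    -- curvature term of a metric H
    (ξ : ((Fin n → ℝ) → Matrix (Fin n) (Fin n) ℝ) → (Fin n → ℝ) → (Fin n → ℝ) → (Fin n → ℝ))
    (hξ : ∀ H x v, ξ H x v =
      Gdot H x v *ᵥ v - (1 / 2 : ℝ) • grad (fun y => v ⬝ᵥ (H y *ᵥ v)) x) :
    ∀ x v : Fin n → ℝ,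
      ξ (fun y => w y • G y) x v =
        w x • ξ G x v + (v ⬝ᵥ grad w x) • (G x *ᵥ v)
          - ((1 / 2 : ℝ) * (v ⬝ᵥ (G x *ᵥ v))) • grad w x := by
  intro x v
  have grad_eq : grad = coordGrad := by
    ext f x k
    exact hgrad f x k
  have quadratic_smul : (fun y => v ⬝ᵥ ((w y • G y) *ᵥ v)) = fun y => w y * (v ⬝ᵥ (G y *ᵥ v)) := by
    ext y
    rw [smul_mulVec, dotProduct_smul, smul_eq_mul]
  rw [hξ, hξ, hGdot, hGdot, of_fderiv_smul_apply hw.differentiableAt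
      (fun i j => (hGdiff i j).differentiableAt), quadratic_smul, grad_eq,
    coordGrad_mul hw.differentiableAt (differentiable_dotProduct_mulVec hGdiff v).differentiableAt,
    fderiv_apply_eq_dotProduct_coordGrad, add_mulVec, smul_mulVec, smul_mulVec]
  module

/-- Product rule for the curvature term of a scaled metric `w·G`:
`ξ_{wG}(x,v) = w(x) ξ_G(x,v) + (vᵀ∇w(x)) G(x)v - ½ (vᵀG(x)v) ∇w(x)`. -/
theorem curvature_scaled_metric {n : ℕ}
    (w : (Fin n → ℝ) → ℝ) (hw : Differentiable ℝ w) (hwpos : ∀ y, 0 < w y)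
    (G : (Fin n → ℝ) → Matrix (Fin n) (Fin n) ℝ)
    (hGdiff : ∀ i j, Differentiable ℝ (fun y => G y i j))
    (hGsym : ∀ y, (G y).IsSymm)
    -- directional derivative matrix: i-th column is (∂_x g_i(x)) v
    (Gdot : ((Fin n → ℝ) → Matrix (Fin n) (Fin n) ℝ) → (Fin n → ℝ) → (Fin n → ℝ) →
      Matrix (Fin n) (Fin n) ℝ)
    (hGdot : ∀ H x v, Gdot H x v = Matrix.of fun i j => fderiv ℝ (fun y => H y i j) x v)
    -- gradient operator on scalar functions (componentwise partial derivatives)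
    (grad : ((Fin n → ℝ) → ℝ) → (Fin n → ℝ) → (Fin n → ℝ))
    (hgrad : ∀ f x k, grad f x k = fderiv ℝ f x (Pi.single k 1))
    -- curvature term of a metric H
    (ξ : ((Fin n → ℝ) → Matrix (Fin n) (Fin n) ℝ) → (Fin n → ℝ) → (Fin n → ℝ) → (Fin n → ℝ))
    (hξ : ∀ H x v, ξ H x v =
      Gdot H x v *ᵥ v - (1 / 2 : ℝ) • grad (fun y => v ⬝ᵥ (H y *ᵥ v)) x) :
    ∀ x v : Fin n → ℝ,
      ξ (fun y => w y • G y) x v =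
        w x • ξ G x v + (v ⬝ᵥ grad w x) • (G x *ᵥ v)
          - ((1 / 2 : ℝ) * (v ⬝ᵥ (G x *ᵥ v))) • grad w x :=
  curvature_scaled_metric_general w hw G hGdiff Gdot hGdot grad hgrad ξ hξ
end
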